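/- arXiv:2409.01134 — 5 statements merged into one kernel-verified Lean document; each statement's English description precedes it below -/
import Mathlib

section
/- Let n ≥ 1 and m > 0. For (t,z) ∈ ℝ × ℝⁿ write φ_t(t,z) = t/⟨t,z⟩ and φ_z(t,z) = z/⟨t,z⟩, where ⟨t,z⟩ = (1 + t² + |z|²)^{1/2}. For every ζ ∈ ℝⁿ set τ = √(|ζ|² + m²). Then: (i) for all (t,z), φ_t(t,z)² + |φ_z(t,z)|² < 1, and τ·(1 − φ_t²) + φ_t·(ζ·φ_z) ≥ τ·√(1 − φ_t²)·(√(1 − φ_t²) − |φ_t|) at (t,z); (ii) along the curve γ(s) = (t₀ + 2τs, z₀ − 2ζs) one has (d/ds)[φ_t(γ(s))] = (2/⟨γ(s)⟩)·(τ·(1 − φ_t(γ(s))²) + φ_t(γ(s))·(ζ·φ_z(γ(s)))); consequently, at every s with |φ_t(γ(s))| ≤ 1/√2, (d/ds)[φ_t(γ(s))] ≥ (√2·m/⟨γ(s)⟩)·(1/√2 − |φ_t(γ(s))|) ≥ 0, so φ_t is nondecreasing along γ in the region where |φ_t| ≤ 1/√2. -/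
/-- `⟨t,z⟩ = (1 + t² + |z|²)^{1/2}`. -/
noncomputable def japBracket {n : ℕ} (p : ℝ × EuclideanSpace ℝ (Fin n)) : ℝ :=
  Real.sqrt (1 + p.1 ^ 2 + ‖p.2‖ ^ 2)

/-- `φ_t(t,z) = t/⟨t,z⟩`. -/
noncomputable def phit {n : ℕ} (p : ℝ × EuclideanSpace ℝ (Fin n)) : ℝ :=
  p.1 / japBracket p

/-- `φ_z(t,z) = z/⟨t,z⟩`. -/
noncomputable def phiz {n : ℕ} (p : ℝ × EuclideanSpace ℝ (Fin n)) :
    EuclideanSpace ℝ (Fin n) :=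
  (japBracket p)⁻¹ • p.2

/-- The future-directed bicharacteristic `γ(s) = (t₀ + 2τs, z₀ − 2ζs)`. -/
noncomputable def bichar {n : ℕ} (t₀ : ℝ) (z₀ ζ : EuclideanSpace ℝ (Fin n)) (τ s : ℝ) :
    ℝ × EuclideanSpace ℝ (Fin n) :=
  (t₀ + 2 * τ * s, z₀ - (2 * s) • ζ)



lemma jap_pos {n : ℕ} (p : ℝ × EuclideanSpace ℝ (Fin n)) : 0 < japBracket p :=
  Real.sqrt_pos.2 (by positivity)

lemma jap_sq {n : ℕ} (p : ℝ × EuclideanSpace ℝ (Fin n)) :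
    japBracket p ^ 2 = 1 + p.1 ^ 2 + ‖p.2‖ ^ 2 :=
  Real.sq_sqrt (by positivity)

lemma part1 {n : ℕ} (p : ℝ × EuclideanSpace ℝ (Fin n)) :
    phit p ^ 2 + ‖phiz p‖ ^ 2 < 1 := by
  have hJ := jap_pos p
  have hs := jap_sq p
  have h1 : phit p ^ 2 = p.1 ^ 2 / japBracket p ^ 2 := by
    rw [phit, div_pow]
  have h2 : ‖phiz p‖ ^ 2 = ‖p.2‖ ^ 2 / japBracket p ^ 2 := by
    rw [phiz, norm_smul, mul_pow, norm_inv, Real.norm_eq_abs, abs_of_pos hJ]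
    field_simp
  rw [h1, h2, ← add_div, div_lt_one (by positivity)]
  linarith

lemma phit_sq_lt_one {n : ℕ} (p : ℝ × EuclideanSpace ℝ (Fin n)) : phit p ^ 2 < 1 :=
  (le_add_of_nonneg_right (by positivity)).trans_lt (part1 p)

lemma part2 {n : ℕ} (m : ℝ) (ζ : EuclideanSpace ℝ (Fin n))
    (p : ℝ × EuclideanSpace ℝ (Fin n)) :
    Real.sqrt (‖ζ‖ ^ 2 + m ^ 2) * Real.sqrt (1 - phit p ^ 2) *
        (Real.sqrt (1 - phit p ^ 2) - |phit p|) ≤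
      Real.sqrt (‖ζ‖ ^ 2 + m ^ 2) * (1 - phit p ^ 2) +
        phit p * (inner ℝ ζ (phiz p) : ℝ) := by
  set τ := Real.sqrt (‖ζ‖ ^ 2 + m ^ 2) with hτdef
  set a := Real.sqrt (1 - phit p ^ 2) with hadef
  have h1 : phit p ^ 2 < 1 := phit_sq_lt_one p
  have ha : a ^ 2 = 1 - phit p ^ 2 := Real.sq_sqrt (by linarith)
  have ha0 : 0 ≤ a := Real.sqrt_nonneg _
  have hτ0 : 0 ≤ τ := Real.sqrt_nonneg _
  have hζτ : ‖ζ‖ ≤ τ := by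
    have := Real.sqrt_le_sqrt (show ‖ζ‖ ^ 2 ≤ ‖ζ‖ ^ 2 + m ^ 2 by nlinarith)
    rwa [Real.sqrt_sq (norm_nonneg _)] at this
  have hz : ‖phiz p‖ ≤ a := by
    have h2 := part1 p
    have := Real.sqrt_le_sqrt (show ‖phiz p‖ ^ 2 ≤ 1 - phit p ^ 2 by linarith)
    rwa [Real.sqrt_sq (norm_nonneg _)] at this
  have hip : |(inner ℝ ζ (phiz p) : ℝ)| ≤ τ * a :=
    (abs_real_inner_le_norm ζ (phiz p)).trans
      (mul_le_mul hζτ hz (norm_nonneg _) hτ0)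
  have key : -(|phit p| * (τ * a)) ≤ phit p * (inner ℝ ζ (phiz p) : ℝ) := by
    have h3 := neg_abs_le (phit p * (inner ℝ ζ (phiz p) : ℝ))
    have h4 : |phit p * (inner ℝ ζ (phiz p) : ℝ)| ≤ |phit p| * (τ * a) := by
      rw [abs_mul]
      exact mul_le_mul_of_nonneg_left hip (abs_nonneg _)
    linarith
  nlinarith [key, ha]

lemma bichar_deriv {n : ℕ} (ζ : EuclideanSpace ℝ (Fin n)) (t₀ : ℝ)
    (z₀ : EuclideanSpace ℝ (Fin n)) (τ s : ℝ) :
    HasDerivAt (fun s' : ℝ => phit (bichar t₀ z₀ ζ τ s'))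
      ((2 / japBracket (bichar t₀ z₀ ζ τ s)) *
        (τ * (1 - phit (bichar t₀ z₀ ζ τ s) ^ 2) +
          phit (bichar t₀ z₀ ζ τ s) *
            (inner ℝ ζ (phiz (bichar t₀ z₀ ζ τ s)) : ℝ))) s := by
  set c : ℝ := inner ℝ z₀ ζ with hc
  set k : ℝ := ‖ζ‖ ^ 2 with hk
  have hnorm : ∀ s' : ℝ, ‖z₀ - (2 * s') • ζ‖ ^ 2
      = ‖z₀‖ ^ 2 - 4 * s' * c + 4 * s' ^ 2 * k := by
    intro s'
    rw [norm_sub_sq_real, real_inner_smul_right, norm_smul, mul_pow,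
      Real.norm_eq_abs, sq_abs]
    ring
  set g : ℝ → ℝ := fun s' => 1 + (t₀ + 2 * τ * s') ^ 2 +
      (‖z₀‖ ^ 2 - 4 * s' * c + 4 * s' ^ 2 * k) with hgdef
  have hgJ : ∀ s', japBracket (bichar t₀ z₀ ζ τ s') = Real.sqrt (g s') := by
    intro s'
    rw [japBracket, bichar, hgdef]
    simp only
    rw [hnorm]
  have hgpos : ∀ s', 0 < g s' := by
    intro s'
    rw [hgdef]
    simp only
    rw [← hnorm]
    positivity
  have hT : HasDerivAt (fun s' : ℝ => t₀ + 2 * τ * s') (2 * τ) s := by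
    simpa using ((hasDerivAt_id s).const_mul (2 * τ)).const_add t₀
  set G : ℝ := 4 * τ * (t₀ + 2 * τ * s) - 4 * c + 8 * s * k with hG
  have hg : HasDerivAt g G s := by
    have h2 : HasDerivAt (fun s' : ℝ => (t₀ + 2 * τ * s') ^ 2)
        (2 * (t₀ + 2 * τ * s) ^ 1 * (2 * τ)) s := by
      simpa using hT.fun_pow 2
    have h3 : HasDerivAt (fun s' : ℝ => 4 * s' * c) (4 * c) s := by
      simpa using (((hasDerivAt_id s).const_mul (4:ℝ)).mul_const c)
    have h4 : HasDerivAt (fun s' : ℝ => 4 * s' ^ 2 * k) (4 * (2 * s ^ 1) * k) s := by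
      simpa using (((hasDerivAt_pow 2 s).const_mul (4:ℝ)).mul_const k)
    have := (h2.const_add 1).fun_add (((hasDerivAt_const s (‖z₀‖ ^ 2)).fun_sub h3).fun_add h4)
    exact this.congr_deriv (by rw [hG]; ring)
  have hr0 : (0:ℝ) < Real.sqrt (g s) := Real.sqrt_pos.2 (hgpos s)
  have hsqrt : HasDerivAt (fun s' => Real.sqrt (g s')) (G / (2 * Real.sqrt (g s))) s :=
    hg.sqrt (hgpos s).ne'
  have hdiv : HasDerivAt (fun s' : ℝ => (t₀ + 2 * τ * s') / Real.sqrt (g s'))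
      ((2 * τ * Real.sqrt (g s) - (t₀ + 2 * τ * s) * (G / (2 * Real.sqrt (g s)))) /
        Real.sqrt (g s) ^ 2) s := hT.div hsqrt hr0.ne'
  have hφ : ∀ s', phit (bichar t₀ z₀ ζ τ s') = (t₀ + 2 * τ * s') / Real.sqrt (g s') := by
    intro s'
    rw [phit, hgJ]
    rfl
  have hfun : (fun s' : ℝ => phit (bichar t₀ z₀ ζ τ s'))
      = fun s' : ℝ => (t₀ + 2 * τ * s') / Real.sqrt (g s') := funext hφ
  rw [hfun]
  convert hdiv using 1
  have hinner : (inner ℝ ζ (phiz (bichar t₀ z₀ ζ τ s)) : ℝ)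
      = (Real.sqrt (g s))⁻¹ * (c - 2 * s * k) := by
    rw [phiz, real_inner_smul_right, hgJ]
    congr 1
    show (inner ℝ ζ (z₀ - (2 * s) • ζ) : ℝ) = c - 2 * s * k
    rw [inner_sub_right, real_inner_smul_right, real_inner_self_eq_norm_sq,
      real_inner_comm]
  rw [hgJ, hφ, hinner]
  have hr2 : Real.sqrt (g s) ^ 2 = g s := Real.sq_sqrt (hgpos s).le
  field_simp
  ring

lemma part4 {n : ℕ} {m : ℝ} (hm : 0 < m) (ζ : EuclideanSpace ℝ (Fin n)) (t₀ : ℝ)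
    (z₀ : EuclideanSpace ℝ (Fin n)) (s : ℝ)
    (hφ : |phit (bichar t₀ z₀ ζ (Real.sqrt (‖ζ‖ ^ 2 + m ^ 2)) s)| ≤ 1 / Real.sqrt 2) :
    Real.sqrt 2 * m / japBracket (bichar t₀ z₀ ζ (Real.sqrt (‖ζ‖ ^ 2 + m ^ 2)) s) *
        (1 / Real.sqrt 2 -
          |phit (bichar t₀ z₀ ζ (Real.sqrt (‖ζ‖ ^ 2 + m ^ 2)) s)|) ≤
      deriv (fun s' : ℝ =>
        phit (bichar t₀ z₀ ζ (Real.sqrt (‖ζ‖ ^ 2 + m ^ 2)) s')) s ∧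
    0 ≤ deriv (fun s' : ℝ =>
        phit (bichar t₀ z₀ ζ (Real.sqrt (‖ζ‖ ^ 2 + m ^ 2)) s')) s := by
  set τ := Real.sqrt (‖ζ‖ ^ 2 + m ^ 2) with hτdef
  set p := bichar t₀ z₀ ζ τ s with hp
  set J := japBracket p with hJdef
  set φ := phit p with hφdef
  set a := Real.sqrt (1 - φ ^ 2) with hadef
  have hD : deriv (fun s' : ℝ => phit (bichar t₀ z₀ ζ τ s')) s
      = (2 / J) * (τ * (1 - φ ^ 2) + φ * (inner ℝ ζ (phiz p) : ℝ)) :=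
    (bichar_deriv ζ t₀ z₀ τ s).deriv
  have hJ0 : 0 < J := jap_pos p
  have hs2 : (0:ℝ) < Real.sqrt 2 := Real.sqrt_pos.2 (by norm_num)
  have s2 : Real.sqrt 2 * Real.sqrt 2 = 2 := Real.mul_self_sqrt (by norm_num)
  have h1 : φ ^ 2 < 1 := phit_sq_lt_one p
  have ha : a ^ 2 = 1 - φ ^ 2 := Real.sq_sqrt (by linarith)
  have ha0 : 0 ≤ a := Real.sqrt_nonneg _
  have hφsq : φ ^ 2 ≤ 1 / 2 := by
    have : |φ| ^ 2 ≤ (1 / Real.sqrt 2) ^ 2 :=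
      pow_le_pow_left₀ (abs_nonneg _) hφ 2
    rw [sq_abs, div_pow, one_pow, Real.sq_sqrt (by norm_num : (0:ℝ) ≤ 2)] at this
    exact this
  have ha_lb : 1 / Real.sqrt 2 ≤ a := by
    have h12 : Real.sqrt (1 / 2) ≤ a := Real.sqrt_le_sqrt (by linarith)
    have : Real.sqrt ((1:ℝ) / 2) = 1 / Real.sqrt 2 := by
      rw [one_div, one_div, Real.sqrt_inv]
    linarith [this ▸ h12]
  have hmτ : m ≤ τ := by
    have := Real.sqrt_le_sqrt (show m ^ 2 ≤ ‖ζ‖ ^ 2 + m ^ 2 by nlinarith [sq_nonneg ‖ζ‖])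
    rwa [Real.sqrt_sq hm.le] at this
  have hv0 : 0 ≤ 1 / Real.sqrt 2 - |φ| := by linarith
  have hτ0 : 0 ≤ τ := Real.sqrt_nonneg _
  have key1 : Real.sqrt 2 * m * (1 / Real.sqrt 2 - |φ|)
      ≤ 2 * (τ * a * (a - |φ|)) := by
    have hτa : Real.sqrt 2 * m ≤ 2 * (τ * a) := by
      have h5 : m * (1 / Real.sqrt 2) ≤ τ * a :=
        mul_le_mul hmτ ha_lb (by positivity) hτ0
      have h6 : Real.sqrt 2 * m = 2 * (m * (1 / Real.sqrt 2)) := by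
        field_simp
        linear_combination s2
      nlinarith
    have huv : 1 / Real.sqrt 2 - |φ| ≤ a - |φ| := by linarith
    have := mul_le_mul hτa huv hv0 (by positivity)
    linarith
  have key2 : Real.sqrt 2 * m / J * (1 / Real.sqrt 2 - |φ|)
      ≤ deriv (fun s' : ℝ => phit (bichar t₀ z₀ ζ τ s')) s := by
    rw [hD]
    have step1 : Real.sqrt 2 * m / J * (1 / Real.sqrt 2 - |φ|)
        ≤ (2 * (τ * a * (a - |φ|))) / J := by
      rw [div_mul_eq_mul_div]
      exact div_le_div_of_nonneg_right key1 hJ0.le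
    have step2 : (2 * (τ * a * (a - |φ|))) / J
        ≤ (2 / J) * (τ * (1 - φ ^ 2) + φ * (inner ℝ ζ (phiz p) : ℝ)) := by
      have h7 := part2 m ζ p
      calc (2 * (τ * a * (a - |φ|))) / J = (2 / J) * (τ * a * (a - |φ|)) := by ring
        _ ≤ _ := mul_le_mul_of_nonneg_left h7 (by positivity)
    linarith
  refine ⟨key2, le_trans ?_ key2⟩
  have : 0 ≤ Real.sqrt 2 * m / J := by positivity
  exact mul_nonneg this hv0

lemma part5 {n : ℕ} {m : ℝ} (hm : 0 < m) (ζ : EuclideanSpace ℝ (Fin n)) (t₀ : ℝ)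
    (z₀ : EuclideanSpace ℝ (Fin n)) (s₁ s₂ : ℝ) (h12 : s₁ ≤ s₂)
    (hmem : ∀ s ∈ Set.Icc s₁ s₂,
      |phit (bichar t₀ z₀ ζ (Real.sqrt (‖ζ‖ ^ 2 + m ^ 2)) s)| ≤ 1 / Real.sqrt 2) :
    phit (bichar t₀ z₀ ζ (Real.sqrt (‖ζ‖ ^ 2 + m ^ 2)) s₁) ≤
      phit (bichar t₀ z₀ ζ (Real.sqrt (‖ζ‖ ^ 2 + m ^ 2)) s₂) := by
  set τ := Real.sqrt (‖ζ‖ ^ 2 + m ^ 2) with hτdef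
  set f : ℝ → ℝ := fun s' => phit (bichar t₀ z₀ ζ τ s') with hf
  have hdiff : Differentiable ℝ f := fun x => (bichar_deriv ζ t₀ z₀ τ x).differentiableAt
  have hmono : MonotoneOn f (Set.Icc s₁ s₂) := by
    apply monotoneOn_of_deriv_nonneg (convex_Icc s₁ s₂) hdiff.continuous.continuousOn
      (hdiff.differentiableOn)
    intro x hx
    rw [interior_Icc] at hx
    exact (part4 hm ζ t₀ z₀ x (hmem x ⟨hx.1.le, hx.2.le⟩)).2
  exact hmono ⟨le_refl _, h12⟩ ⟨h12, le_refl _⟩ h12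

/-- (i) `φ_t² + |φ_z|² < 1` and the pointwise lower bound
`τ(1−φ_t²) + φ_t(ζ·φ_z) ≥ τ√(1−φ_t²)(√(1−φ_t²) − |φ_t|)` with `τ = √(|ζ|²+m²)`;
(ii) along the bicharacteristic `γ(s) = (t₀+2τs, z₀−2ζs)` the derivative formula
`(d/ds)[φ_t(γ(s))] = (2/⟨γ(s)⟩)(τ(1−φ_t²) + φ_t(ζ·φ_z))` holds, hence wherever
`|φ_t(γ(s))| ≤ 1/√2` one has
`(d/ds)[φ_t(γ(s))] ≥ (√2·m/⟨γ(s)⟩)(1/√2 − |φ_t(γ(s))|) ≥ 0`, so `φ_t` is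
nondecreasing along `γ` in the region `|φ_t| ≤ 1/√2`. -/
theorem stmt3 (n : ℕ) (hn : 1 ≤ n) (m : ℝ) (hm : 0 < m) :
    (∀ p : ℝ × EuclideanSpace ℝ (Fin n), phit p ^ 2 + ‖phiz p‖ ^ 2 < 1) ∧
    (∀ (ζ : EuclideanSpace ℝ (Fin n)) (p : ℝ × EuclideanSpace ℝ (Fin n)),
      Real.sqrt (‖ζ‖ ^ 2 + m ^ 2) * Real.sqrt (1 - phit p ^ 2) *
          (Real.sqrt (1 - phit p ^ 2) - |phit p|) ≤
        Real.sqrt (‖ζ‖ ^ 2 + m ^ 2) * (1 - phit p ^ 2) +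
          phit p * (inner ℝ ζ (phiz p) : ℝ)) ∧
    (∀ (ζ : EuclideanSpace ℝ (Fin n)) (t₀ : ℝ) (z₀ : EuclideanSpace ℝ (Fin n)) (s : ℝ),
      HasDerivAt
        (fun s' : ℝ => phit (bichar t₀ z₀ ζ (Real.sqrt (‖ζ‖ ^ 2 + m ^ 2)) s'))
        ((2 / japBracket (bichar t₀ z₀ ζ (Real.sqrt (‖ζ‖ ^ 2 + m ^ 2)) s)) *
          (Real.sqrt (‖ζ‖ ^ 2 + m ^ 2) *
              (1 - phit (bichar t₀ z₀ ζ (Real.sqrt (‖ζ‖ ^ 2 + m ^ 2)) s) ^ 2) +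
            phit (bichar t₀ z₀ ζ (Real.sqrt (‖ζ‖ ^ 2 + m ^ 2)) s) *
              (inner ℝ ζ (phiz (bichar t₀ z₀ ζ (Real.sqrt (‖ζ‖ ^ 2 + m ^ 2)) s)) : ℝ))) s) ∧
    (∀ (ζ : EuclideanSpace ℝ (Fin n)) (t₀ : ℝ) (z₀ : EuclideanSpace ℝ (Fin n)) (s : ℝ),
      |phit (bichar t₀ z₀ ζ (Real.sqrt (‖ζ‖ ^ 2 + m ^ 2)) s)| ≤ 1 / Real.sqrt 2 →
      Real.sqrt 2 * m / japBracket (bichar t₀ z₀ ζ (Real.sqrt (‖ζ‖ ^ 2 + m ^ 2)) s) *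
          (1 / Real.sqrt 2 -
            |phit (bichar t₀ z₀ ζ (Real.sqrt (‖ζ‖ ^ 2 + m ^ 2)) s)|) ≤
        deriv (fun s' : ℝ =>
          phit (bichar t₀ z₀ ζ (Real.sqrt (‖ζ‖ ^ 2 + m ^ 2)) s')) s ∧
      0 ≤ deriv (fun s' : ℝ =>
          phit (bichar t₀ z₀ ζ (Real.sqrt (‖ζ‖ ^ 2 + m ^ 2)) s')) s) ∧
    (∀ (ζ : EuclideanSpace ℝ (Fin n)) (t₀ : ℝ) (z₀ : EuclideanSpace ℝ (Fin n))
        (s₁ s₂ : ℝ), s₁ ≤ s₂ →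
      (∀ s ∈ Set.Icc s₁ s₂,
        |phit (bichar t₀ z₀ ζ (Real.sqrt (‖ζ‖ ^ 2 + m ^ 2)) s)| ≤ 1 / Real.sqrt 2) →
      phit (bichar t₀ z₀ ζ (Real.sqrt (‖ζ‖ ^ 2 + m ^ 2)) s₁) ≤
        phit (bichar t₀ z₀ ζ (Real.sqrt (‖ζ‖ ^ 2 + m ^ 2)) s₂)) := by
  exact ⟨part1, fun ζ p => part2 m ζ p,
    fun ζ t₀ z₀ s => bichar_deriv ζ t₀ z₀ _ s,
    fun ζ t₀ z₀ s h => part4 hm ζ t₀ z₀ s h,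
    fun ζ t₀ z₀ s₁ s₂ h12 hmem => part5 hm ζ t₀ z₀ s₁ s₂ h12 hmem⟩
end

section
/- Let n ≥ 1, m > 0, and let f : ℝ → ℝ be a differentiable function with f′ ≤ 0 everywhere and f′(σ) = 0 whenever |σ| ≥ 1/√2. Then for every ζ ∈ ℝⁿ, τ = √(|ζ|² + m²), and (t₀,z₀) ∈ ℝ × ℝⁿ, the function s ↦ f(φ_t(γ(s))) is nonincreasing on ℝ, where γ(s) = (t₀ + 2τs, z₀ − 2ζs) and φ_t(t,z) = t/⟨t,z⟩. -/
set_option maxHeartbeats 1000000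


lemma aux_anti (f : ℝ → ℝ) (hf : Differentiable ℝ f)
    (hf' : ∀ σ : ℝ, deriv f σ ≤ 0)
    (hf'0 : ∀ σ : ℝ, 1 / Real.sqrt 2 ≤ |σ| → deriv f σ = 0)
    (τ a b c t₀ : ℝ) (hτ : 0 < τ) (hb : 0 ≤ b) (hbτ : b ≤ τ) (hc : 0 ≤ c)
    (ha : |a| ≤ c * b) :
    Antitone (fun s : ℝ => f ((t₀ + 2 * τ * s) /
      Real.sqrt (1 + (t₀ + 2 * τ * s) ^ 2 + (c ^ 2 - 4 * a * s + 4 * b ^ 2 * s ^ 2)))) := by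
  have ha2 : a ^ 2 ≤ c ^ 2 * b ^ 2 := by nlinarith [abs_le.1 ha, abs_nonneg a, neg_abs_le a, le_abs_self a]
  have hQ : ∀ s : ℝ, 0 ≤ c ^ 2 - 4 * a * s + 4 * b ^ 2 * s ^ 2 := by
    intro s
    rcases le_or_gt 0 s with hs | hs
    · nlinarith [sq_nonneg (c - 2 * b * s), mul_nonneg (sub_nonneg.2 (abs_le.1 ha).2) hs]
    · nlinarith [sq_nonneg (c + 2 * b * s), mul_nonneg (sub_nonneg.2 (neg_le.1 (abs_le.1 ha).1)) (le_of_lt (neg_pos.2 hs))]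
  have hD : ∀ s : ℝ, 0 < 1 + (t₀ + 2 * τ * s) ^ 2 + (c ^ 2 - 4 * a * s + 4 * b ^ 2 * s ^ 2) := by
    intro s; nlinarith [hQ s, sq_nonneg (t₀ + 2 * τ * s)]
  have hsq : ∀ s : ℝ, 0 < Real.sqrt (1 + (t₀ + 2 * τ * s) ^ 2 + (c ^ 2 - 4 * a * s + 4 * b ^ 2 * s ^ 2)) :=
    fun s => Real.sqrt_pos.2 (hD s)
  -- derivative data
  have key : ∀ s : ℝ, ∃ E : ℝ, HasDerivAt (fun s : ℝ => f ((t₀ + 2 * τ * s) /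
      Real.sqrt (1 + (t₀ + 2 * τ * s) ^ 2 + (c ^ 2 - 4 * a * s + 4 * b ^ 2 * s ^ 2)))) E s ∧ E ≤ 0 := by
    intro s
    set T : ℝ := t₀ + 2 * τ * s with hTdef
    set Q : ℝ := c ^ 2 - 4 * a * s + 4 * b ^ 2 * s ^ 2 with hQdef
    set D : ℝ := 1 + T ^ 2 + Q with hDdef
    set S : ℝ := Real.sqrt D with hSdef
    have hDpos : 0 < D := hD s
    have hSpos : 0 < S := hsq s
    have hSS : S ^ 2 = D := Real.sq_sqrt hDpos.le
    have hT : HasDerivAt (fun s : ℝ => t₀ + 2 * τ * s) (2 * τ) s := by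
      simpa using ((hasDerivAt_id s).const_mul (2 * τ)).const_add t₀
    have hQd : HasDerivAt (fun s : ℝ => c ^ 2 - 4 * a * s + 4 * b ^ 2 * s ^ 2)
        (-(4 * a) + 4 * b ^ 2 * (2 * s)) s := by
      have h1 : HasDerivAt (fun s : ℝ => 4 * a * s) (4 * a) s := by
        simpa using (hasDerivAt_id s).const_mul (4 * a)
      have h2 : HasDerivAt (fun s : ℝ => 4 * b ^ 2 * s ^ 2) (4 * b ^ 2 * (2 * s)) s := by
        simpa using (hasDerivAt_pow 2 s).const_mul (4 * b ^ 2)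
      have h3 := ((hasDerivAt_const s (c ^ 2)).sub h1).add h2; simp only [zero_sub] at h3; exact h3
    have hDd : HasDerivAt (fun s : ℝ => 1 + (t₀ + 2 * τ * s) ^ 2 + (c ^ 2 - 4 * a * s + 4 * b ^ 2 * s ^ 2))
        (2 * T ^ 1 * (2 * τ) + (-(4 * a) + 4 * b ^ 2 * (2 * s))) s := by
      exact ((hT.pow 2).const_add 1).add hQd
    set D' : ℝ := 2 * T ^ 1 * (2 * τ) + (-(4 * a) + 4 * b ^ 2 * (2 * s)) with hD'def
    have hSd : HasDerivAt (fun s : ℝ => Real.sqrt (1 + (t₀ + 2 * τ * s) ^ 2 + (c ^ 2 - 4 * a * s + 4 * b ^ 2 * s ^ 2)))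
        (1 / (2 * S) * D') s := by
      exact (Real.hasDerivAt_sqrt hDpos.ne').comp s hDd
    have hφ : HasDerivAt (fun s : ℝ => (t₀ + 2 * τ * s) /
        Real.sqrt (1 + (t₀ + 2 * τ * s) ^ 2 + (c ^ 2 - 4 * a * s + 4 * b ^ 2 * s ^ 2)))
        ((2 * τ * S - T * (1 / (2 * S) * D')) / S ^ 2) s := hT.div hSd hSpos.ne'
    have hg : HasDerivAt (fun s : ℝ => f ((t₀ + 2 * τ * s) /
        Real.sqrt (1 + (t₀ + 2 * τ * s) ^ 2 + (c ^ 2 - 4 * a * s + 4 * b ^ 2 * s ^ 2))))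
        (deriv f (T / S) * ((2 * τ * S - T * (1 / (2 * S) * D')) / S ^ 2)) s := by
      exact ((hf (T / S)).hasDerivAt).comp s hφ
    refine ⟨_, hg, ?_⟩
    rcases le_total (1 + Q) (T ^ 2) with hcase | hcase
    · -- |φ| ≥ 1/√2 : derivative of f vanishes
      have habs : 1 / Real.sqrt 2 ≤ |T / S| := by
        have hDle : D ≤ 2 * T ^ 2 := by rw [hDdef]; linarith
        have h1 : S ≤ Real.sqrt 2 * |T| := by
          calc S ≤ Real.sqrt (2 * T ^ 2) := Real.sqrt_le_sqrt hDle
          _ = Real.sqrt 2 * |T| := by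
              rw [Real.sqrt_mul (by norm_num), Real.sqrt_sq_eq_abs]
        rw [abs_div, abs_of_pos hSpos, div_le_div_iff₀ (Real.sqrt_pos.2 two_pos) hSpos]
        nlinarith
      rw [hf'0 _ habs, zero_mul]
    · -- φ' ≥ 0
      have hQs : 0 ≤ Q := hQ s
      have hdisc : (a - 2 * s * b ^ 2) ^ 2 ≤ Q * b ^ 2 := by
        have : Q * b ^ 2 - (a - 2 * s * b ^ 2) ^ 2 = c ^ 2 * b ^ 2 - a ^ 2 := by rw [hQdef]; ring
        nlinarith
      have hb2 : b ^ 2 ≤ τ ^ 2 := by nlinarith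
      have hx2 : (T * (a - 2 * s * b ^ 2)) ^ 2 ≤ ((1 + Q) * τ) ^ 2 := by
        have h1 : T ^ 2 * (a - 2 * s * b ^ 2) ^ 2 ≤ (1 + Q) * (Q * b ^ 2) :=
          mul_le_mul hcase hdisc (sq_nonneg _) (by linarith)
        have h2 : Q * b ^ 2 ≤ (1 + Q) * τ ^ 2 := by
          nlinarith [mul_nonneg hQs (sub_nonneg.2 hb2)]
        have h3 : (1 + Q) * (Q * b ^ 2) ≤ (1 + Q) * ((1 + Q) * τ ^ 2) :=
          mul_le_mul_of_nonneg_left h2 (by linarith)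
        calc (T * (a - 2 * s * b ^ 2)) ^ 2 = T ^ 2 * (a - 2 * s * b ^ 2) ^ 2 := by ring
        _ ≤ (1 + Q) * ((1 + Q) * τ ^ 2) := le_trans h1 h3
        _ = ((1 + Q) * τ) ^ 2 := by ring
      have hxabs : |T * (a - 2 * s * b ^ 2)| ≤ (1 + Q) * τ := by
        have h1 := Real.sqrt_le_sqrt hx2
        rwa [Real.sqrt_sq_eq_abs, Real.sqrt_sq_eq_abs, abs_of_pos (by nlinarith : (0:ℝ) < (1 + Q) * τ)] at h1
      have hkey : 0 ≤ 4 * τ * D - T * D' := by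
        have h2 : -((1 + Q) * τ) ≤ T * (a - 2 * s * b ^ 2) := neg_le_of_abs_le hxabs
        have : 4 * τ * D - T * D' = 4 * τ * (1 + Q) + 4 * (T * (a - 2 * s * b ^ 2)) := by
          rw [hD'def, hDdef]; ring
        rw [this]; linarith
      have hSSmul : S * S = D := Real.mul_self_sqrt hDpos.le
      have hNeq : 2 * τ * S - T * (1 / (2 * S) * D') = (4 * τ * D - T * D') / (2 * S) := by
        rw [eq_div_iff (by positivity : (2 * S) ≠ 0), ← hSSmul]
        field_simp
        ring
      have hnum : 0 ≤ 2 * τ * S - T * (1 / (2 * S) * D') := by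
        rw [hNeq]; positivity
      exact mul_nonpos_of_nonpos_of_nonneg (hf' _) (div_nonneg hnum (sq_nonneg _))
  have hdiff : Differentiable ℝ (fun s : ℝ => f ((t₀ + 2 * τ * s) /
      Real.sqrt (1 + (t₀ + 2 * τ * s) ^ 2 + (c ^ 2 - 4 * a * s + 4 * b ^ 2 * s ^ 2)))) := by
    intro s; obtain ⟨E, hE, _⟩ := key s; exact hE.differentiableAt
  refine antitone_of_deriv_nonpos hdiff ?_
  intro s
  obtain ⟨E, hE, hE0⟩ := key s
  rw [hE.deriv]; exact hE0

/-- if `f : ℝ → ℝ` is differentiable with `f′ ≤ 0` everywhere and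
`f′(σ) = 0` whenever `|σ| ≥ 1/√2`, then for every momentum `ζ`,
`τ = √(|ζ|²+m²)` and base point `(t₀,z₀)`, the function
`s ↦ f(φ_t(γ(s)))` is nonincreasing along the bicharacteristic
`γ(s) = (t₀ + 2τs, z₀ − 2ζs)`, where `φ_t(t,z) = t/⟨t,z⟩`. -/
theorem stmt6 (n : ℕ) (hn : 1 ≤ n) (m : ℝ) (hm : 0 < m)
    (f : ℝ → ℝ) (hf : Differentiable ℝ f)
    (hf' : ∀ σ : ℝ, deriv f σ ≤ 0)
    (hf'0 : ∀ σ : ℝ, 1 / Real.sqrt 2 ≤ |σ| → deriv f σ = 0) :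
    ∀ (ζ : EuclideanSpace ℝ (Fin n)) (t₀ : ℝ) (z₀ : EuclideanSpace ℝ (Fin n)),
      Antitone (fun s : ℝ =>
        f ((t₀ + 2 * Real.sqrt (‖ζ‖ ^ 2 + m ^ 2) * s) /
          Real.sqrt (1 + (t₀ + 2 * Real.sqrt (‖ζ‖ ^ 2 + m ^ 2) * s) ^ 2 +
            ‖z₀ - (2 * s) • ζ‖ ^ 2))) := by
  intro ζ t₀ z₀
  set τ : ℝ := Real.sqrt (‖ζ‖ ^ 2 + m ^ 2) with hτdef
  have hτ : 0 < τ := Real.sqrt_pos.2 (by positivity)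
  have hbτ : ‖ζ‖ ≤ τ := by
    rw [hτdef]
    calc ‖ζ‖ = Real.sqrt (‖ζ‖ ^ 2) := (Real.sqrt_sq (norm_nonneg _)).symm
    _ ≤ Real.sqrt (‖ζ‖ ^ 2 + m ^ 2) := Real.sqrt_le_sqrt (by nlinarith)
  have hnorm : ∀ s : ℝ, ‖z₀ - (2 * s) • ζ‖ ^ 2 =
      ‖z₀‖ ^ 2 - 4 * (inner ℝ z₀ ζ : ℝ) * s + 4 * ‖ζ‖ ^ 2 * s ^ 2 := by
    intro s
    rw [norm_sub_sq_real, real_inner_smul_right, norm_smul]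
    simp only [Real.norm_eq_abs, mul_pow, sq_abs]
    ring
  have heq : (fun s : ℝ =>
        f ((t₀ + 2 * τ * s) /
          Real.sqrt (1 + (t₀ + 2 * τ * s) ^ 2 + ‖z₀ - (2 * s) • ζ‖ ^ 2))) =
      (fun s : ℝ => f ((t₀ + 2 * τ * s) /
        Real.sqrt (1 + (t₀ + 2 * τ * s) ^ 2 +
          (‖z₀‖ ^ 2 - 4 * (inner ℝ z₀ ζ : ℝ) * s + 4 * ‖ζ‖ ^ 2 * s ^ 2)))) := by
    funext s; rw [hnorm s]
  rw [heq]
  exact aux_anti f hf hf' hf'0 τ (inner ℝ z₀ ζ) ‖ζ‖ ‖z₀‖ t₀ hτ (norm_nonneg _) hbτ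
    (norm_nonneg _) (abs_real_inner_le_norm z₀ ζ)
end

section
/- Let n ≥ 1, m > 0, E ≥ 0, and ψ ∈ C_c^∞(ℝ). Define g : ℝ × ℝⁿ → ℝ by g(τ,ζ) = ψ((τ² − |ζ|² − m²)/(τ² + |ζ|² + m² + E)). Then g is smooth, and for every multi-index α ∈ ℕ^{1+n} there is a constant C_α such that |∂^α g(τ,ζ)| ≤ C_α·(1 + τ² + |ζ|²)^{−|α|/2} for all (τ,ζ) ∈ ℝ × ℝⁿ; that is, g is a symbol of order zero on ℝ^{1+n}. -/
open Set Metric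

section aux

variable {E' F' : Type*} [NormedAddCommGroup E'] [NormedSpace ℝ E']
  [NormedAddCommGroup F'] [NormedSpace ℝ F']

private theorem fderiv_comp_add_right'' (f : E' → F') (c : E') (x : E') :
    fderiv ℝ (fun y => f (y + c)) x = fderiv ℝ f (x + c) := by
  by_cases h : DifferentiableAt ℝ f (x + c)
  · have h2 : HasFDerivAt (fun y : E' => y + c) (ContinuousLinearMap.id ℝ E') x :=
      (hasFDerivAt_id x).add_const c
    have h3 := (h.hasFDerivAt.comp x h2).fderiv
    simpa [Function.comp_def] using h3
  · rw [fderiv_zero_of_not_differentiableAt h, fderiv_zero_of_not_differentiableAt]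
    intro hd
    apply h
    have hd' : DifferentiableAt ℝ (fun y => f (y + c)) ((x + c) + -c) := by
      simpa using hd
    have := hd'.comp (x + c) (differentiableAt_id.add_const (-c))
    simpa [Function.comp_def, neg_add_cancel_right] using this

private theorem iteratedFDeriv_comp_add_right_aux (k : ℕ) (f : E' → F') (c : E') (x : E') :
    iteratedFDeriv ℝ k (fun y => f (y + c)) x = iteratedFDeriv ℝ k f (x + c) := by
  induction k generalizing x with
  | zero => ext m; simp
  | succ k IH =>
    ext1 m
    rw [iteratedFDeriv_succ_apply_left, iteratedFDeriv_succ_apply_left]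
    rw [show iteratedFDeriv ℝ k (fun y => f (y + c)) = fun y => iteratedFDeriv ℝ k f (y + c)
      from funext IH]
    rw [fderiv_comp_add_right'' (iteratedFDeriv ℝ k f) c x]

end aux

private noncomputable def symF (n : ℕ) (m E : ℝ) (ψ : ℝ → ℝ)
    (x : (ℝ × EuclideanSpace ℝ (Fin n)) × ℝ) : ℝ :=
  ψ ((x.1.1 ^ 2 - ‖x.1.2‖ ^ 2 - m ^ 2 * x.2 ^ 2) /
     (x.1.1 ^ 2 + ‖x.1.2‖ ^ 2 + (m ^ 2 + E) * x.2 ^ 2))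

private lemma symF_den_pos {n : ℕ} {m E : ℝ} (hm : 0 < m) (hE : 0 ≤ E)
    {x : (ℝ × EuclideanSpace ℝ (Fin n)) × ℝ} (hx : x ≠ 0) :
    0 < x.1.1 ^ 2 + ‖x.1.2‖ ^ 2 + (m ^ 2 + E) * x.2 ^ 2 := by
  have h1 : (0:ℝ) ≤ x.1.1 ^ 2 := sq_nonneg _
  have h2 : (0:ℝ) ≤ ‖x.1.2‖ ^ 2 := by positivity
  have hmE : (0:ℝ) < m ^ 2 + E := by positivity
  have h3 : (0:ℝ) ≤ (m ^ 2 + E) * x.2 ^ 2 := by positivity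
  have hor : x.1.1 ≠ 0 ∨ x.1.2 ≠ 0 ∨ x.2 ≠ 0 := by
    by_contra hcon
    push_neg at hcon
    obtain ⟨a, b, c⟩ := hcon
    apply hx
    rw [Prod.ext_iff, Prod.ext_iff]
    exact ⟨⟨a, b⟩, c⟩
  rcases hor with h | h | h
  · have h4 : 0 < |x.1.1| ^ 2 := pow_pos (abs_pos.2 h) 2
    rw [sq_abs] at h4; linarith
  · have h4 : 0 < ‖x.1.2‖ ^ 2 := pow_pos (norm_pos_iff.2 h) 2
    linarith
  · have h4 : 0 < (m ^ 2 + E) * x.2 ^ 2 := by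
      have := pow_pos (abs_pos.2 h) 2
      rw [sq_abs] at this
      exact mul_pos hmE this
    linarith

private lemma symF_contDiffOn {n : ℕ} {m E : ℝ} {ψ : ℝ → ℝ} (hm : 0 < m) (hE : 0 ≤ E)
    (hψ : ContDiff ℝ (⊤ : ℕ∞) ψ) :
    ContDiffOn ℝ (⊤ : ℕ∞) (symF n m E ψ) {x | x ≠ 0} := by
  have hn2 : ContDiff ℝ (⊤ : ℕ∞)
      (fun x : (ℝ × EuclideanSpace ℝ (Fin n)) × ℝ => ‖x.1.2‖ ^ 2) :=
    (contDiff_norm_sq ℝ).comp (contDiff_fst.snd)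
  have hnum : ContDiff ℝ (⊤ : ℕ∞)
      (fun x : (ℝ × EuclideanSpace ℝ (Fin n)) × ℝ =>
        x.1.1 ^ 2 - ‖x.1.2‖ ^ 2 - m ^ 2 * x.2 ^ 2) :=
    ((contDiff_fst.fst.pow 2).sub hn2).sub (contDiff_const.mul (contDiff_snd.pow 2))
  have hden : ContDiff ℝ (⊤ : ℕ∞)
      (fun x : (ℝ × EuclideanSpace ℝ (Fin n)) × ℝ =>
        x.1.1 ^ 2 + ‖x.1.2‖ ^ 2 + (m ^ 2 + E) * x.2 ^ 2) :=
    ((contDiff_fst.fst.pow 2).add hn2).add (contDiff_const.mul (contDiff_snd.pow 2))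
  exact hψ.comp_contDiffOn
    (ContDiffOn.div hnum.contDiffOn hden.contDiffOn
      (fun x hx => (symF_den_pos hm hE hx).ne'))

private lemma symF_smul {n : ℕ} (m E : ℝ) (ψ : ℝ → ℝ) {c : ℝ} (hc : c ≠ 0)
    (x : (ℝ × EuclideanSpace ℝ (Fin n)) × ℝ) : symF n m E ψ (c • x) = symF n m E ψ x := by
  unfold symF
  congr 1
  have h1 : (c • x).1.1 = c * x.1.1 := rfl
  have h2 : (c • x).1.2 = c • x.1.2 := rfl
  have h3 : (c • x).2 = c * x.2 := rfl
  have hc2 : c ^ 2 ≠ 0 := pow_ne_zero 2 hc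
  rw [h1, h2, h3, norm_smul, Real.norm_eq_abs]
  rw [show (c * x.1.1) ^ 2 - (|c| * ‖x.1.2‖) ^ 2 - m ^ 2 * (c * x.2) ^ 2
      = c ^ 2 * (x.1.1 ^ 2 - ‖x.1.2‖ ^ 2 - m ^ 2 * x.2 ^ 2) by
    rw [mul_pow |c|, sq_abs]; ring]
  rw [show (c * x.1.1) ^ 2 + (|c| * ‖x.1.2‖) ^ 2 + (m ^ 2 + E) * (c * x.2) ^ 2
      = c ^ 2 * (x.1.1 ^ 2 + ‖x.1.2‖ ^ 2 + (m ^ 2 + E) * x.2 ^ 2) by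
    rw [mul_pow |c|, sq_abs]; ring]
  rw [mul_div_mul_left _ _ hc2]

set_option maxHeartbeats 2000000 in
/-- for `ψ ∈ C_c^∞(ℝ)`, `m > 0` and `E ≥ 0`, the function
`g(τ,ζ) = ψ((τ² − |ζ|² − m²)/(τ² + |ζ|² + m² + E))` is smooth and is a symbol
of order zero on `ℝ^{1+n}`: every `k`-th derivative is bounded by
`C_k·(1 + τ² + |ζ|²)^{−k/2}`. -/
theorem stmt10 (n : ℕ) (hn : 1 ≤ n) (m : ℝ) (hm : 0 < m) (E : ℝ) (hE : 0 ≤ E)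
    (ψ : ℝ → ℝ) (hψ : ContDiff ℝ (⊤ : ℕ∞) ψ) (hψc : HasCompactSupport ψ) :
    ContDiff ℝ (⊤ : ℕ∞)
      (fun p : ℝ × EuclideanSpace ℝ (Fin n) =>
        ψ ((p.1 ^ 2 - ‖p.2‖ ^ 2 - m ^ 2) / (p.1 ^ 2 + ‖p.2‖ ^ 2 + m ^ 2 + E))) ∧
    ∀ k : ℕ, ∃ C : ℝ, ∀ p : ℝ × EuclideanSpace ℝ (Fin n),
      ‖iteratedFDeriv ℝ k
          (fun q : ℝ × EuclideanSpace ℝ (Fin n) =>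
            ψ ((q.1 ^ 2 - ‖q.2‖ ^ 2 - m ^ 2) / (q.1 ^ 2 + ‖q.2‖ ^ 2 + m ^ 2 + E))) p‖ ≤
        C * (1 + p.1 ^ 2 + ‖p.2‖ ^ 2) ^ (-(k : ℝ) / 2) := by
  -- shorthand for the ambient big space
  have hsmooth : ContDiff ℝ (⊤ : ℕ∞)
      (fun p : ℝ × EuclideanSpace ℝ (Fin n) =>
        ψ ((p.1 ^ 2 - ‖p.2‖ ^ 2 - m ^ 2) / (p.1 ^ 2 + ‖p.2‖ ^ 2 + m ^ 2 + E))) := by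
    apply hψ.comp
    have hnn : ContDiff ℝ (⊤ : ℕ∞) (fun p : ℝ × EuclideanSpace ℝ (Fin n) => ‖p.2‖ ^ 2) :=
      (contDiff_norm_sq ℝ).comp contDiff_snd
    have hnum : ContDiff ℝ (⊤ : ℕ∞)
        (fun p : ℝ × EuclideanSpace ℝ (Fin n) => p.1 ^ 2 - ‖p.2‖ ^ 2 - m ^ 2) :=
      ((contDiff_fst.pow 2).sub hnn).sub contDiff_const
    have hden : ContDiff ℝ (⊤ : ℕ∞)
        (fun p : ℝ × EuclideanSpace ℝ (Fin n) => p.1 ^ 2 + ‖p.2‖ ^ 2 + m ^ 2 + E) :=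
      (((contDiff_fst.pow 2).add hnn).add contDiff_const).add contDiff_const
    apply ContDiff.div hnum hden
    · intro p
      have h1 : (0:ℝ) ≤ p.1 ^ 2 := sq_nonneg _
      have h2 : (0:ℝ) ≤ ‖p.2‖ ^ 2 := by positivity
      have h3 : (0:ℝ) < m ^ 2 := pow_pos hm 2
      have : (0:ℝ) < p.1 ^ 2 + ‖p.2‖ ^ 2 + m ^ 2 + E := by linarith
      exact this.ne'
  refine ⟨hsmooth, fun k => ?_⟩
  set U : Set ((ℝ × EuclideanSpace ℝ (Fin n)) × ℝ) := {x | x ≠ 0} with hUdef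
  have hUopen : IsOpen U := isOpen_ne
  have hU : UniqueDiffOn ℝ U := hUopen.uniqueDiffOn
  have hFU : ContDiffOn ℝ (⊤ : ℕ∞) (symF n m E ψ) U := symF_contDiffOn hm hE hψ
  have hsub : sphere (0 : (ℝ × EuclideanSpace ℝ (Fin n)) × ℝ) 1 ⊆ U := by
    intro y hy
    have hy1 : ‖y‖ = 1 := mem_sphere_zero_iff_norm.1 hy
    intro h0
    rw [h0] at hy1; simp at hy1
  obtain ⟨C, hC⟩ :=
    (isCompact_sphere (0 : (ℝ × EuclideanSpace ℝ (Fin n)) × ℝ) 1).exists_bound_of_continuousOn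
      ((hFU.continuousOn_iteratedFDerivWithin (m := k) (by exact_mod_cast le_top) hU).mono hsub)
  refine ⟨max C 0 * 3 ^ ((k : ℝ) / 2), fun p => ?_⟩
  set e : (ℝ × EuclideanSpace ℝ (Fin n)) × ℝ := ((0 : ℝ × EuclideanSpace ℝ (Fin n)), (1 : ℝ))
    with hedef
  set ι := ContinuousLinearMap.inl ℝ (ℝ × EuclideanSpace ℝ (Fin n)) ℝ with hιdef
  have hfun : (fun q : ℝ × EuclideanSpace ℝ (Fin n) =>
      ψ ((q.1 ^ 2 - ‖q.2‖ ^ 2 - m ^ 2) / (q.1 ^ 2 + ‖q.2‖ ^ 2 + m ^ 2 + E)))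
      = (fun y : (ℝ × EuclideanSpace ℝ (Fin n)) × ℝ => symF n m E ψ (y + e)) ∘ ι := by
    funext q
    simp only [Function.comp_apply, hιdef, ContinuousLinearMap.inl_apply, hedef, symF,
      Prod.mk_add_mk, add_zero, zero_add, Prod.fst_add, Prod.snd_add]
    norm_num
    congr 1
    ring
  rw [hfun]
  set V : Set ((ℝ × EuclideanSpace ℝ (Fin n)) × ℝ) := (fun y => y + e) ⁻¹' U with hVdef
  have hVopen : IsOpen V := hUopen.preimage (continuous_add_right e)
  have hmem : ∀ q : ℝ × EuclideanSpace ℝ (Fin n), ι q ∈ V := by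
    intro q
    simp only [hVdef, Set.mem_preimage, hUdef, Set.mem_setOf_eq]
    intro h
    have h2 := congrArg Prod.snd h
    simp [hιdef, hedef] at h2
  have hpre : ι ⁻¹' V = Set.univ := Set.eq_univ_of_forall hmem
  have hτV : ContDiffOn ℝ (⊤ : ℕ∞)
      (fun y : (ℝ × EuclideanSpace ℝ (Fin n)) × ℝ => symF n m E ψ (y + e)) V :=
    hFU.comp (contDiff_id.add contDiff_const : ContDiff ℝ (⊤:ℕ∞) fun y : (ℝ × EuclideanSpace ℝ (Fin n)) × ℝ => y + e).contDiffOn (fun y hy => hy)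
  have e1 : iteratedFDeriv ℝ k
        ((fun y : (ℝ × EuclideanSpace ℝ (Fin n)) × ℝ => symF n m E ψ (y + e)) ∘ ι) p
      = (iteratedFDerivWithin ℝ k
          (fun y : (ℝ × EuclideanSpace ℝ (Fin n)) × ℝ => symF n m E ψ (y + e)) V
          (ι p)).compContinuousLinearMap (fun _ => ι) := by
    rw [← iteratedFDerivWithin_univ, ← hpre]
    exact ι.iteratedFDerivWithin_comp_right hτV hVopen.uniqueDiffOn
      (by rw [hpre]; exact uniqueDiffOn_univ) (hmem p) (by exact_mod_cast le_top)
  have hxe : ι p + e = ((p, 1) : (ℝ × EuclideanSpace ℝ (Fin n)) × ℝ) := by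
    simp [hιdef, hedef, Prod.ext_iff]
  have hx0 : ((p, 1) : (ℝ × EuclideanSpace ℝ (Fin n)) × ℝ) ≠ 0 := by
    intro h
    have h2 := congrArg Prod.snd h
    simp at h2
  have e2 : iteratedFDerivWithin ℝ k
        (fun y : (ℝ × EuclideanSpace ℝ (Fin n)) × ℝ => symF n m E ψ (y + e)) V (ι p)
      = iteratedFDeriv ℝ k (symF n m E ψ) ((p, 1)) := by
    rw [iteratedFDerivWithin_of_isOpen k hVopen (hmem p),
      iteratedFDeriv_comp_add_right_aux k (symF n m E ψ) e (ι p), hxe]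
  -- scaling
  set R := ‖((p, 1) : (ℝ × EuclideanSpace ℝ (Fin n)) × ℝ)‖ with hRdef
  have hRmax : R = max ‖p‖ 1 := by rw [hRdef, Prod.norm_def]; norm_num
  have hR1 : (1:ℝ) ≤ R := hRmax ▸ le_max_right _ _
  have hR0 : (0:ℝ) < R := lt_of_lt_of_le one_pos hR1
  have hRinv : R⁻¹ ≠ 0 := inv_ne_zero hR0.ne'
  set σ : ((ℝ × EuclideanSpace ℝ (Fin n)) × ℝ) ≃L[ℝ] ((ℝ × EuclideanSpace ℝ (Fin n)) × ℝ) :=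
    { LinearEquiv.smulOfNeZero ℝ _ R⁻¹ hRinv with
      continuous_toFun := continuous_const_smul _
      continuous_invFun := continuous_const_smul _ } with hσdef
  have hσapp : ∀ y : (ℝ × EuclideanSpace ℝ (Fin n)) × ℝ, σ y = R⁻¹ • y := fun y => rfl
  have hσmem : σ ((p, 1)) ∈ U := by
    simp only [hUdef, Set.mem_setOf_eq, hσapp]
    exact smul_ne_zero hRinv hx0
  have hσpre : (σ : ((ℝ × EuclideanSpace ℝ (Fin n)) × ℝ) → _) ⁻¹' U = U := by
    ext y
    simp [hUdef, hσapp, smul_eq_zero, hRinv]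
  have hhomog : (symF n m E ψ) ∘ σ = symF n m E ψ := by
    funext y
    rw [Function.comp_apply, hσapp]
    exact symF_smul m E ψ hRinv y
  have e3 := σ.iteratedFDerivWithin_comp_right (symF n m E ψ) hU hσmem k
  rw [hhomog, hσpre] at e3
  -- e3 : iteratedFDerivWithin ℝ k (symF n m E ψ) U (p,1) = (iFDW at σ (p,1)).compCLM σ
  have hglobU : iteratedFDeriv ℝ k (symF n m E ψ) ((p, 1))
      = iteratedFDerivWithin ℝ k (symF n m E ψ) U ((p, 1)) :=
    (iteratedFDerivWithin_of_isOpen k hUopen hx0).symm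
  -- sphere membership
  have hy0 : σ ((p, 1)) ∈ sphere (0 : (ℝ × EuclideanSpace ℝ (Fin n)) × ℝ) 1 := by
    rw [mem_sphere_zero_iff_norm, hσapp, norm_smul, Real.norm_eq_abs,
      abs_of_pos (inv_pos.2 hR0), ← hRdef]
    field_simp
  have hσnorm : ‖(σ : ((ℝ × EuclideanSpace ℝ (Fin n)) × ℝ) →L[ℝ]
      ((ℝ × EuclideanSpace ℝ (Fin n)) × ℝ))‖ ≤ R⁻¹ := by
    apply ContinuousLinearMap.opNorm_le_bound _ (inv_nonneg.2 hR0.le)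
    intro y
    rw [ContinuousLinearEquiv.coe_coe, hσapp, norm_smul, Real.norm_eq_abs,
      abs_of_pos (inv_pos.2 hR0)]
  have hC0 : 0 ≤ C := le_trans (norm_nonneg _) (hC _ hy0)
  -- arithmetic
  have hA : (0:ℝ) < 1 + p.1 ^ 2 + ‖p.2‖ ^ 2 := by positivity
  have hA3 : 1 + p.1 ^ 2 + ‖p.2‖ ^ 2 ≤ 3 * R ^ 2 := by
    have hp1 : |p.1| ≤ R := by
      rw [hRmax]
      exact le_trans (le_trans (Real.norm_eq_abs p.1 ▸ norm_fst_le p) (le_refl _))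
        (le_max_left _ _)
    have hp2 : ‖p.2‖ ≤ R := by
      rw [hRmax]
      exact le_trans (norm_snd_le p) (le_max_left _ _)
    have h1 : p.1 ^ 2 ≤ R ^ 2 := by
      have := pow_le_pow_left₀ (abs_nonneg p.1) hp1 2
      rwa [sq_abs] at this
    have h2 : ‖p.2‖ ^ 2 ≤ R ^ 2 := pow_le_pow_left₀ (norm_nonneg _) hp2 2
    have h3 : (1:ℝ) ≤ R ^ 2 := by nlinarith
    linarith
  have hkey : (R⁻¹) ^ k ≤ 3 ^ ((k : ℝ) / 2) * (1 + p.1 ^ 2 + ‖p.2‖ ^ 2) ^ (-(k : ℝ) / 2) := by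
    have hE1 : ((R ^ 2 : ℝ)) ^ (-(k : ℝ) / 2) = (R⁻¹) ^ k := by
      rw [← Real.rpow_natCast R 2, ← Real.rpow_mul hR0.le,
        show ((2:ℕ):ℝ) * (-(k : ℝ) / 2) = -(k : ℝ) by push_cast; ring,
        Real.rpow_neg hR0.le, Real.rpow_natCast, inv_pow]
    have h31 : (3:ℝ) ^ ((k : ℝ) / 2) * (1 + p.1 ^ 2 + ‖p.2‖ ^ 2) ^ (-(k : ℝ) / 2)
        = ((1 + p.1 ^ 2 + ‖p.2‖ ^ 2) / 3) ^ (-(k : ℝ) / 2) := by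
      rw [Real.div_rpow hA.le (by norm_num : (0:ℝ) ≤ 3), neg_div,
        Real.rpow_neg (by norm_num : (0:ℝ) ≤ 3), div_inv_eq_mul]
      ring
    rw [← hE1, h31]
    apply Real.rpow_le_rpow_of_nonpos
    · positivity
    · rw [div_le_iff₀ (by norm_num : (0:ℝ) < 3)]
      linarith [hA3]
    · have : (0:ℝ) ≤ (k : ℝ) / 2 := by positivity
      linarith
  -- assemble
  calc ‖iteratedFDeriv ℝ k
        ((fun y : (ℝ × EuclideanSpace ℝ (Fin n)) × ℝ => symF n m E ψ (y + e)) ∘ ι) p‖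
      = ‖(iteratedFDerivWithin ℝ k
          (fun y : (ℝ × EuclideanSpace ℝ (Fin n)) × ℝ => symF n m E ψ (y + e)) V
          (ι p)).compContinuousLinearMap (fun _ => ι)‖ := by rw [e1]
    _ ≤ ‖iteratedFDerivWithin ℝ k
          (fun y : (ℝ × EuclideanSpace ℝ (Fin n)) × ℝ => symF n m E ψ (y + e)) V (ι p)‖
          * ∏ _i : Fin k, ‖ι‖ :=
        ContinuousMultilinearMap.norm_compContinuousLinearMap_le _ _
    _ ≤ ‖iteratedFDerivWithin ℝ k
          (fun y : (ℝ × EuclideanSpace ℝ (Fin n)) × ℝ => symF n m E ψ (y + e)) V (ι p)‖ * 1 := by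
        apply mul_le_mul_of_nonneg_left _ (norm_nonneg _)
        apply Finset.prod_le_one (fun _ _ => norm_nonneg _)
        intro i _
        apply ContinuousLinearMap.opNorm_le_bound _ zero_le_one
        intro q
        rw [hιdef, ContinuousLinearMap.inl_apply, one_mul, Prod.norm_def]
        simp
    _ = ‖(iteratedFDerivWithin ℝ k (symF n m E ψ) U (σ ((p, 1)))).compContinuousLinearMap
          (fun _ => (σ : ((ℝ × EuclideanSpace ℝ (Fin n)) × ℝ) →L[ℝ]
            ((ℝ × EuclideanSpace ℝ (Fin n)) × ℝ)))‖ := by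
        rw [mul_one, e2, hglobU, e3]
    _ ≤ ‖iteratedFDerivWithin ℝ k (symF n m E ψ) U (σ ((p, 1)))‖
          * ∏ _i : Fin k, ‖(σ : ((ℝ × EuclideanSpace ℝ (Fin n)) × ℝ) →L[ℝ]
            ((ℝ × EuclideanSpace ℝ (Fin n)) × ℝ))‖ :=
        ContinuousMultilinearMap.norm_compContinuousLinearMap_le _ _
    _ ≤ C * (R⁻¹) ^ k := by
        apply mul_le_mul (hC _ hy0) ?_ (Finset.prod_nonneg fun _ _ => norm_nonneg _) hC0
        rw [Finset.prod_const, Finset.card_univ, Fintype.card_fin]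
        exact pow_le_pow_left₀ (norm_nonneg _) hσnorm k
    _ ≤ max C 0 * ((R⁻¹) ^ k) := by
        apply mul_le_mul_of_nonneg_right (le_max_left _ _) (by positivity)
    _ ≤ max C 0 * 3 ^ ((k : ℝ) / 2) * (1 + p.1 ^ 2 + ‖p.2‖ ^ 2) ^ (-(k : ℝ) / 2) := by
        rw [mul_assoc]
        exact mul_le_mul_of_nonneg_left hkey (le_max_right _ _)
end

section
/- Let H be a complex Hilbert space, let A and Q be bounded self-adjoint operators on H, and let c > 0. Let ψ, ψ₁, φ : ℝ → ℝ be continuous compactly supported functions satisfying ψ·ψ₁ = ψ₁ and ψ₁·φ = φ (pointwise products). Assume that ψ(A)·Q·ψ(A) − c·ψ(A)² is a positive operator, where ψ(A), ψ₁(A), φ(A) denote the continuous functional calculus of A. Then for every c′ ∈ (0, c) there exists a bounded operator B on H such that φ(A)·(Q − c′)·φ(A) = φ(A)·B*·B·φ(A); in particular φ(A)·(Q − c′)·φ(A) is a positive operator. -/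
set_option synthInstance.maxHeartbeats 1000000
set_option maxHeartbeats 1000000

/-- Gårding-type square root construction. If `A`, `Q` are
bounded self-adjoint operators on a complex Hilbert space, `c > 0`,
`ψ, ψ₁, φ` are continuous compactly supported real functions with
`ψ·ψ₁ = ψ₁` and `ψ₁·φ = φ`, and `ψ(A)·Q·ψ(A) − c·ψ(A)²` is a positive
operator, then for every `c′ ∈ (0,c)` there is a bounded operator `B` with
`φ(A)(Q − c′)φ(A) = φ(A)·B*B·φ(A)`; in particular `φ(A)(Q − c′)φ(A)` is
positive. -/
theorem stmt13 {H : Type*} [NormedAddCommGroup H] [InnerProductSpace ℂ H]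
    [CompleteSpace H]
    (A Q : H →L[ℂ] H) (hA : IsSelfAdjoint A) (hQ : IsSelfAdjoint Q)
    (c : ℝ) (hc : 0 < c)
    (ψ ψ₁ φ : ℝ → ℝ)
    (hψ : Continuous ψ) (hψc : HasCompactSupport ψ)
    (hψ₁ : Continuous ψ₁) (hψ₁c : HasCompactSupport ψ₁)
    (hφ : Continuous φ) (hφc : HasCompactSupport φ)
    (h₁ : ∀ σ : ℝ, ψ σ * ψ₁ σ = ψ₁ σ)
    (h₂ : ∀ σ : ℝ, ψ₁ σ * φ σ = φ σ)
    (hpos : (cfc ψ A * Q * cfc ψ A - c • (cfc ψ A) ^ 2).IsPositive) :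
    ∀ c' : ℝ, 0 < c' → c' < c →
      ∃ B : H →L[ℂ] H,
        cfc φ A * (Q - c' • (1 : H →L[ℂ] H)) * cfc φ A =
          cfc φ A * (star B * B) * cfc φ A ∧
        (cfc φ A * (Q - c' • (1 : H →L[ℂ] H)) * cfc φ A).IsPositive := by
  intro c' hc'0 hc'c
  set P := cfc ψ A with hP
  set P₁ := cfc ψ₁ A with hP₁
  set F := cfc φ A with hF
  -- products of cfc's
  have hPP₁ : P * P₁ = P₁ := by
    rw [hP, hP₁, ← cfc_mul _ _ A hψ.continuousOn hψ₁.continuousOn]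
    exact cfc_congr fun x _ => h₁ x
  have hP₁F : P₁ * F = F := by
    rw [hP₁, hF, ← cfc_mul _ _ A hψ₁.continuousOn hφ.continuousOn]
    exact cfc_congr fun x _ => h₂ x
  have hFP₁ : F * P₁ = F := by
    rw [hP₁, hF, ← cfc_mul _ _ A hφ.continuousOn hψ₁.continuousOn]
    exact cfc_congr fun x _ => by rw [mul_comm]; exact h₂ x
  have hPF : P * F = F := by
    rw [← hP₁F, ← mul_assoc, hPP₁]
  have hFP : F * P = F := by
    rw [hP, hF, ← cfc_mul _ _ A hφ.continuousOn hψ.continuousOn]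
    have : ∀ x, φ x * ψ x = φ x := fun x => by
      linear_combination (1 - ψ x) * h₂ x + φ x * h₁ x
    exact cfc_congr fun x _ => this x
  -- the operator T
  set T : H →L[ℂ] H := (P * Q * P - c • P ^ 2) + ((c - c') : ℝ) • (1 : H →L[ℂ] H) with hT
  have hT0 : 0 ≤ T := by
    have h1 : 0 ≤ P * Q * P - c • P ^ 2 :=
      (ContinuousLinearMap.nonneg_iff_isPositive _).2 hpos
    have h2 : 0 ≤ ((c - c') : ℝ) • (1 : H →L[ℂ] H) := by
      have : (0 : H →L[ℂ] H) ≤ 1 :=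
        (ContinuousLinearMap.nonneg_iff_isPositive _).2 ContinuousLinearMap.isPositive_one
      have := smul_nonneg (le_of_lt (sub_pos.2 hc'c)) this
      simpa using this
    calc (0 : H →L[ℂ] H) = 0 + 0 := by rw [add_zero]
    _ ≤ _ := add_le_add h1 h2
  set S := CFC.sqrt T with hS
  have hSS : S * S = T := CFC.sqrt_mul_sqrt_self T hT0
  have hSsa : IsSelfAdjoint S := (CFC.sqrt_nonneg (a := T)).isSelfAdjoint
  have hP₁sa : IsSelfAdjoint P₁ := cfc_predicate ψ₁ A
  have hFsa : IsSelfAdjoint F := cfc_predicate φ A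
  refine ⟨S * P₁, ?_, ?_⟩
  · -- main identity
    have key : F * (star (S * P₁) * (S * P₁)) * F = F * T * F := by
      rw [star_mul, hP₁sa.star_eq, hSsa.star_eq]
      calc F * (P₁ * S * (S * P₁)) * F
          = (F * P₁) * (S * S) * (P₁ * F) := by noncomm_ring
        _ = F * T * F := by rw [hSS, hFP₁, hP₁F]
    rw [key, hT]
    have hFsq : F * (1 : H →L[ℂ] H) * F = F * F := by rw [mul_one]
    have e1 : F * (P * Q * P) * F = F * Q * F := by
      calc F * (P * Q * P) * F = (F * P) * Q * (P * F) := by noncomm_ring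
        _ = F * Q * F := by rw [hFP, hPF]
    have e2 : F * P ^ 2 * F = F * F := by
      calc F * P ^ 2 * F = (F * P) * (P * F) := by noncomm_ring
        _ = F * F := by rw [hFP, hPF]
    calc F * (Q - c' • (1 : H →L[ℂ] H)) * F
        = F * Q * F - c' • (F * F) := by
          simp [mul_sub, sub_mul, mul_smul_comm, smul_mul_assoc]
      _ = F * ((P * Q * P - c • P ^ 2) + ((c - c') : ℝ) • (1 : H →L[ℂ] H)) * F := by
          rw [mul_add, add_mul, mul_sub, sub_mul, e1]
          rw [mul_smul_comm, smul_mul_assoc, e2]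
          rw [mul_smul_comm, smul_mul_assoc, mul_one]
          rw [sub_smul]
          abel
  · -- positivity
    have : F * (star (S * P₁) * (S * P₁)) * F = star (S * P₁ * F) * (S * P₁ * F) := by
      simp only [star_mul, hFsa.star_eq, hP₁sa.star_eq, hSsa.star_eq]
      noncomm_ring
    have key : F * (star (S * P₁) * (S * P₁)) * F = F * T * F := by
      rw [star_mul, hP₁sa.star_eq, hSsa.star_eq]
      calc F * (P₁ * S * (S * P₁)) * F
          = (F * P₁) * (S * S) * (P₁ * F) := by noncomm_ring
        _ = F * T * F := by rw [hSS, hFP₁, hP₁F]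
    have main : F * (Q - c' • (1 : H →L[ℂ] H)) * F = star (S * P₁ * F) * (S * P₁ * F) := by
      rw [← this, key, hT]
      have e1 : F * (P * Q * P) * F = F * Q * F := by
        calc F * (P * Q * P) * F = (F * P) * Q * (P * F) := by noncomm_ring
          _ = F * Q * F := by rw [hFP, hPF]
      have e2 : F * P ^ 2 * F = F * F := by
        calc F * P ^ 2 * F = (F * P) * (P * F) := by noncomm_ring
          _ = F * F := by rw [hFP, hPF]
      calc F * (Q - c' • (1 : H →L[ℂ] H)) * F
          = F * Q * F - c' • (F * F) := by
            simp [mul_sub, sub_mul, mul_smul_comm, smul_mul_assoc]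
        _ = F * ((P * Q * P - c • P ^ 2) + ((c - c') : ℝ) • (1 : H →L[ℂ] H)) * F := by
            rw [mul_add, add_mul, mul_sub, sub_mul, e1]
            rw [mul_smul_comm, smul_mul_assoc, e2]
            rw [mul_smul_comm, smul_mul_assoc, mul_one]
            rw [sub_smul]
            abel
    rw [main]
    exact (ContinuousLinearMap.nonneg_iff_isPositive _).1 (star_mul_self_nonneg _)
end

section
/- Let U ⊆ ℝ^k be open and let H : U → ℝ^k be a smooth vector field; for a differentiable function F : U → ℝ write H F(p) = DF(p)[H(p)]. Let N, ω : U → ℝ be smooth with H N ≡ 1, H ω ≡ 0, and ω ≥ 0 on U. Let χ₀(σ) = exp(−1/σ) for σ > 0 and χ₀(σ) = 0 for σ ≤ 0 (so χ₀ is smooth and χ₀(σ) = σ²·χ₀′(σ)), and let χ₁ : ℝ → [0,1] be smooth and nondecreasing with χ₁ = 0 on (−∞,0] and χ₁ = 1 on [1,∞). Let ε, δ, M, β > 0 with β > 64·δ·M, and set φ = N + ω/ε, q₀ = χ₀(β^{−1}(2 − φ/δ))·χ₁(N/δ + 2), g₀² = 2β^{−1}δ^{−1}·χ₀(β^{−1}(2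 − φ/δ))·χ₀′(β^{−1}(2 − φ/δ))·χ₁(N/δ + 2)², e₀² = 2δ^{−1}·χ₀(β^{−1}(2 − φ/δ))²·χ₁(N/δ + 2)·χ₁′(N/δ + 2), and r = (Mδ/(2β))·(2 − φ/δ)². Then on all of U one has the identity H(q₀²) + M·q₀² = −(1 − r)·g₀² + e₀², and 0 ≤ r < 1 at every point of U where q₀ ≠ 0. -/
/-- The cutoff `χ₀(σ) = exp(−1/σ)` for `σ > 0`, `χ₀(σ) = 0` for `σ ≤ 0`. -/
noncomputable def chiZero (σ : ℝ) : ℝ := if 0 < σ then Real.exp (-1 / σ) else 0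

lemma chiZero_eq : chiZero = expNegInvGlue := by
  funext x
  unfold chiZero expNegInvGlue
  by_cases h : 0 < x
  · rw [if_pos h, if_neg (not_le.2 h), neg_div, one_div]
  · rw [if_neg h, if_pos (le_of_not_gt h)]

lemma chiZero_contDiff : ContDiff ℝ (⊤ : ℕ∞) chiZero := by
  rw [chiZero_eq]; exact expNegInvGlue.contDiff

lemma chiZero_nonpos {σ : ℝ} (h : σ ≤ 0) : chiZero σ = 0 := by
  rw [chiZero_eq]; exact expNegInvGlue.zero_of_nonpos h

lemma chiZero_deriv_pos {σ : ℝ} (h : 0 < σ) :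
    deriv chiZero σ = Real.exp (-1 / σ) * (σ ^ 2)⁻¹ := by
  have hne : σ ≠ 0 := ne_of_gt h
  have h1 : HasDerivAt (fun x : ℝ => Real.exp (-(x⁻¹))) (Real.exp (-(σ⁻¹)) * (σ ^ 2)⁻¹) σ := by
    have := ((hasDerivAt_inv hne).neg).exp
    simpa [neg_neg] using this
  have hev : chiZero =ᶠ[nhds σ] fun x : ℝ => Real.exp (-(x⁻¹)) := by
    filter_upwards [IsOpen.mem_nhds isOpen_Ioi h] with x hx
    simp [chiZero, Set.mem_Ioi.mp hx, neg_div, one_div]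
  have := (h1.congr_of_eventuallyEq hev).deriv
  rw [this, neg_div, one_div]

lemma chiZero_key (σ : ℝ) : chiZero σ = σ ^ 2 * deriv chiZero σ := by
  rcases lt_trichotomy σ 0 with h | h | h
  · have hd : deriv chiZero σ = 0 := by
      have hev : chiZero =ᶠ[nhds σ] fun _ => (0 : ℝ) := by
        filter_upwards [IsOpen.mem_nhds isOpen_Iio h] with x hx
        exact chiZero_nonpos (le_of_lt hx)
      rw [hev.deriv_eq, deriv_const]
    rw [hd, chiZero_nonpos h.le, mul_zero]
  · subst h; rw [chiZero_nonpos le_rfl]; ring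
  · rw [chiZero_deriv_pos h]
    have : chiZero σ = Real.exp (-1 / σ) := by simp [chiZero, h]
    rw [this]
    field_simp

lemma chiZero_pos_of_ne {σ : ℝ} (h : chiZero σ ≠ 0) : 0 < σ := by
  by_contra hc
  exact h (chiZero_nonpos (le_of_not_gt hc))


set_option maxHeartbeats 2000000 in
/-- the commutant identity for the propagation-of-singularities
commutator.  With `H F(p) = DF(p)[H(p)]` the derivative along the vector field
`H`, functions `N, ω` with `H N ≡ 1`, `H ω ≡ 0`, `ω ≥ 0` on the open set `U`,
the cutoffs `χ₀` (explicit) and `χ₁`, parameters `ε, δ, M, β > 0` with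
`β > 64·δ·M`, and `φ = N + ω/ε`,
`q₀ = χ₀(β⁻¹(2 − φ/δ))·χ₁(N/δ + 2)`, one has on all of `U`
`H(q₀²) + M·q₀² = −(1 − r)·g₀² + e₀²` (with `g₀², e₀², r` as displayed), and
`0 ≤ r < 1` wherever `q₀ ≠ 0` on `U`. -/
theorem stmt14 (k : ℕ) (U : Set (EuclideanSpace ℝ (Fin k))) (hU : IsOpen U)
    (H : EuclideanSpace ℝ (Fin k) → EuclideanSpace ℝ (Fin k))
    (N ω : EuclideanSpace ℝ (Fin k) → ℝ)
    (hH : ContDiffOn ℝ (⊤ : ℕ∞) H U)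
    (hN : ContDiffOn ℝ (⊤ : ℕ∞) N U)
    (hω : ContDiffOn ℝ (⊤ : ℕ∞) ω U)
    (hHN : ∀ p ∈ U, fderiv ℝ N p (H p) = 1)
    (hHω : ∀ p ∈ U, fderiv ℝ ω p (H p) = 0)
    (hωpos : ∀ p ∈ U, 0 ≤ ω p)
    (χ₁ : ℝ → ℝ) (hχ₁ : ContDiff ℝ (⊤ : ℕ∞) χ₁) (hχ₁mono : Monotone χ₁)
    (hχ₁0 : ∀ σ : ℝ, σ ≤ 0 → χ₁ σ = 0) (hχ₁1 : ∀ σ : ℝ, 1 ≤ σ → χ₁ σ = 1)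
    (ε δ M β : ℝ) (hε : 0 < ε) (hδ : 0 < δ) (hM : 0 < M) (hβ : 64 * δ * M < β) :
    let φ : EuclideanSpace ℝ (Fin k) → ℝ := fun p => N p + ω p / ε
    let q₀ : EuclideanSpace ℝ (Fin k) → ℝ := fun p =>
      chiZero (β⁻¹ * (2 - φ p / δ)) * χ₁ (N p / δ + 2)
    let g₀sq : EuclideanSpace ℝ (Fin k) → ℝ := fun p =>
      2 * β⁻¹ * δ⁻¹ * chiZero (β⁻¹ * (2 - φ p / δ)) *
        deriv chiZero (β⁻¹ * (2 - φ p / δ)) * (χ₁ (N p / δ + 2)) ^ 2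
    let e₀sq : EuclideanSpace ℝ (Fin k) → ℝ := fun p =>
      2 * δ⁻¹ * (chiZero (β⁻¹ * (2 - φ p / δ))) ^ 2 *
        χ₁ (N p / δ + 2) * deriv χ₁ (N p / δ + 2)
    let r : EuclideanSpace ℝ (Fin k) → ℝ := fun p =>
      (M * δ / (2 * β)) * (2 - φ p / δ) ^ 2
    ∀ p ∈ U,
      (fderiv ℝ (fun x => (q₀ x) ^ 2) p (H p) + M * (q₀ p) ^ 2 =
        -(1 - r p) * g₀sq p + e₀sq p) ∧
      (q₀ p ≠ 0 → 0 ≤ r p ∧ r p < 1) := by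
  intro φ q₀ g₀sq e₀sq r p hp
  have hβpos : (0 : ℝ) < β := lt_trans (by positivity) hβ
  have hmem := hU.mem_nhds hp
  have hNd : DifferentiableAt ℝ N p :=
    (hN.contDiffAt hmem).differentiableAt (by simp)
  have hωd : DifferentiableAt ℝ ω p :=
    (hω.contDiffAt hmem).differentiableAt (by simp)
  -- derivative of φ, a, b
  have hφd : HasFDerivAt (fun x => N x + ω x / ε)
      (fderiv ℝ N p + (ε⁻¹ : ℝ) • fderiv ℝ ω p) p := by
    have h2 : HasFDerivAt (fun x => ω x / ε) ((ε⁻¹ : ℝ) • fderiv ℝ ω p) p := by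
      simpa [div_eq_inv_mul, smul_smul, Pi.smul_def, smul_eq_mul] using hωd.hasFDerivAt.const_smul (ε⁻¹ : ℝ)
    exact hNd.hasFDerivAt.add h2
  have hdiv : HasFDerivAt (fun x => (N x + ω x / ε) / δ)
      ((δ⁻¹ : ℝ) • (fderiv ℝ N p + (ε⁻¹ : ℝ) • fderiv ℝ ω p)) p := by
    simpa [div_eq_inv_mul, Pi.smul_def, smul_eq_mul] using hφd.const_smul (δ⁻¹ : ℝ)
  have had : HasFDerivAt (fun x => β⁻¹ * (2 - (N x + ω x / ε) / δ))
      ((β⁻¹ : ℝ) • (-((δ⁻¹ : ℝ) • (fderiv ℝ N p + (ε⁻¹ : ℝ) • fderiv ℝ ω p)))) p :=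
    (hdiv.const_sub 2).const_mul β⁻¹
  have hNdiv : HasFDerivAt (fun x => N x / δ) ((δ⁻¹ : ℝ) • fderiv ℝ N p) p := by
    simpa [div_eq_inv_mul, Pi.smul_def, smul_eq_mul] using hNd.hasFDerivAt.const_smul (δ⁻¹ : ℝ)
  have hbd : HasFDerivAt (fun x => N x / δ + 2) ((δ⁻¹ : ℝ) • fderiv ℝ N p) p :=
    hNdiv.add_const 2
  set ap : ℝ := β⁻¹ * (2 - (N p + ω p / ε) / δ) with hap
  set bp : ℝ := N p / δ + 2 with hbp
  have hc0 : HasDerivAt chiZero (deriv chiZero ap) ap :=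
    ((chiZero_contDiff.differentiable (by simp)) ap).hasDerivAt
  have hc1 : HasDerivAt χ₁ (deriv χ₁ bp) bp :=
    ((hχ₁.differentiable (by simp)) bp).hasDerivAt
  have hq : HasFDerivAt (fun x => chiZero (β⁻¹ * (2 - (N x + ω x / ε) / δ)) * χ₁ (N x / δ + 2))
      (chiZero ap • ((deriv χ₁ bp) • ((δ⁻¹ : ℝ) • fderiv ℝ N p)) +
        χ₁ bp • ((deriv chiZero ap) •
          ((β⁻¹ : ℝ) • (-((δ⁻¹ : ℝ) • (fderiv ℝ N p + (ε⁻¹ : ℝ) • fderiv ℝ ω p)))))) p := by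
    have := (hc0.comp_hasFDerivAt p had).mul (hc1.comp_hasFDerivAt p hbd); exact this
  have hq2 : HasFDerivAt
      (fun x => (chiZero (β⁻¹ * (2 - (N x + ω x / ε) / δ)) * χ₁ (N x / δ + 2)) ^ 2)
      ((chiZero ap * χ₁ bp) •
          (chiZero ap • ((deriv χ₁ bp) • ((δ⁻¹ : ℝ) • fderiv ℝ N p)) +
            χ₁ bp • ((deriv chiZero ap) •
              ((β⁻¹ : ℝ) • (-((δ⁻¹ : ℝ) • (fderiv ℝ N p + (ε⁻¹ : ℝ) • fderiv ℝ ω p)))))) +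
        (chiZero ap * χ₁ bp) •
          (chiZero ap • ((deriv χ₁ bp) • ((δ⁻¹ : ℝ) • fderiv ℝ N p)) +
            χ₁ bp • ((deriv chiZero ap) •
              ((β⁻¹ : ℝ) • (-((δ⁻¹ : ℝ) • (fderiv ℝ N p + (ε⁻¹ : ℝ) • fderiv ℝ ω p))))))) p := by
    simpa [sq, Pi.mul_def] using hq.mul hq
  have hfd := hq2.fderiv
  constructor
  · have hval : fderiv ℝ (fun x => (q₀ x) ^ 2) p (H p) =
        (2 * (chiZero ap * χ₁ bp)) *
          (chiZero ap * (deriv χ₁ bp * (δ⁻¹ * fderiv ℝ N p (H p))) +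
            χ₁ bp * (deriv chiZero ap *
              (β⁻¹ * (-(δ⁻¹ * (fderiv ℝ N p (H p) + ε⁻¹ * fderiv ℝ ω p (H p))))))) := by
      rw [show (fun x => (q₀ x) ^ 2) =
        (fun x => (chiZero (β⁻¹ * (2 - (N x + ω x / ε) / δ)) * χ₁ (N x / δ + 2)) ^ 2) from rfl]
      rw [hfd]
      simp [ContinuousLinearMap.add_apply, ContinuousLinearMap.smul_apply,
        ContinuousLinearMap.neg_apply, smul_eq_mul]
      ring
    rw [hval, hHN p hp, hHω p hp]
    show 2 * (chiZero ap * χ₁ bp) *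
          (chiZero ap * (deriv χ₁ bp * (δ⁻¹ * 1)) +
            χ₁ bp * (deriv chiZero ap * (β⁻¹ * -(δ⁻¹ * (1 + ε⁻¹ * 0))))) +
        M * (chiZero ap * χ₁ bp) ^ 2 =
        -(1 - (M * δ / (2 * β)) * (2 - (N p + ω p / ε) / δ) ^ 2) *
          (2 * β⁻¹ * δ⁻¹ * chiZero ap * deriv chiZero ap * (χ₁ bp) ^ 2) +
        2 * δ⁻¹ * (chiZero ap) ^ 2 * χ₁ bp * deriv χ₁ bp
    have hkey := chiZero_key ap
    have h2φ : 2 - (N p + ω p / ε) / δ = β * ap := by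
      rw [hap]; field_simp
    rw [h2φ, hkey]
    have hβne : β ≠ 0 := ne_of_gt hβpos
    have hδne : δ ≠ 0 := ne_of_gt hδ
    clear hval hfd hq2 hq hc0 hc1 hbd hNdiv had hdiv hφd hkey h2φ
    clear_value ap bp
    generalize deriv chiZero ap = c0' 
    generalize χ₁ bp = c1
    generalize deriv χ₁ bp = c1'
    simp only [mul_zero, add_zero, mul_one]
    field_simp
    ring
  · intro hq0
    have hc0ne : chiZero ap ≠ 0 := fun h => hq0 (by show chiZero ap * χ₁ bp = 0; rw [h, zero_mul])
    have hc1ne : χ₁ bp ≠ 0 := fun h => hq0 (by show chiZero ap * χ₁ bp = 0; rw [h, mul_zero])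
    have hapos : 0 < ap := chiZero_pos_of_ne hc0ne
    have hbpos : 0 < bp := by
      by_contra hc
      exact hc1ne (hχ₁0 bp (le_of_not_gt hc))
    -- N p > -2δ, ω p ≥ 0 ⇒ φ p / δ > -2 ⇒ 2 - φ p / δ < 4
    have hNlow : -2 * δ < N p := by
      have h1 : 0 < N p / δ + 2 := hbp ▸ hbpos
      have h2 : -2 < N p / δ := by linarith
      have := (lt_div_iff₀ hδ).mp h2
      linarith
    have hφlow : -2 * δ < N p + ω p / ε := by
      have hω0 : 0 ≤ ω p / ε := div_nonneg (hωpos p hp) hε.le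
      linarith
    have hup : 2 - (N p + ω p / ε) / δ < 4 := by
      have : -2 < (N p + ω p / ε) / δ := by
        rw [lt_div_iff₀ hδ]; linarith
      linarith
    have hlow : 0 < 2 - (N p + ω p / ε) / δ := by
      have : 0 < β * ap := mul_pos hβpos hapos
      have h2φ : 2 - (N p + ω p / ε) / δ = β * ap := by
        rw [hap]; field_simp
      rw [h2φ]; exact this
    constructor
    · show 0 ≤ (M * δ / (2 * β)) * (2 - (N p + ω p / ε) / δ) ^ 2
      positivity
    · show (M * δ / (2 * β)) * (2 - (N p + ω p / ε) / δ) ^ 2 < 1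
      have h1 : (2 - (N p + ω p / ε) / δ) ^ 2 < 16 := by nlinarith
      have h2 : M * δ / (2 * β) < 1 / 16 := by
        rw [div_lt_div_iff₀ (by positivity) (by norm_num)]
        nlinarith
      calc (M * δ / (2 * β)) * (2 - (N p + ω p / ε) / δ) ^ 2
          < (1/16) * 16 := by
            apply mul_lt_mul'' h2 h1 (by positivity) (by positivity)
        _ = 1 := by norm_num
end
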